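/- arXiv:0803.2629 — 2 statements merged into one kernel-verified Lean document; each statement's English description precedes it below -/
import Mathlib

section
/- Let p be a prime number, let u ∈ ℂ^p, and let û = F_p u be its discrete Fourier transform. If u ≠ 0, then |supp(u)| + |supp(û)| ≥ p + 1. -/
/-!
The key input is Chebotarev's theorem: for `p` prime and `μ` a primitive `p`-th root of unity,
every square minor of `(μ ^ (j * k))` is nonsingular. Granting it, if
`|supp u| + |supp û| ≤ p`, pick `|supp u|` zeros of `û`; the minor on those rows and the columns
`supp u` kills the nonzero vector `u|supp u`.

For Chebotarev, work in `ℤ[ζ] = ℤ[X]/(Φ_p)`, which embeds into any characteristic-zero field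
and maps onto `𝔽_p` with `ζ ↦ 1` and kernel `(ζ - 1)`. A kernel vector `c` of the minor,
divided by the largest power of `ζ - 1` dividing all its entries, has an entry `c_j ∉ (ζ - 1)`.
The polynomial `∑ c_k X ^ b_k` vanishes at the `n` distinct points `ζ ^ a_i`, so `(X - 1) ^ n`
divides its reduction mod `ζ - 1`, a nonzero polynomial over `𝔽_p` of degree `< p` with at most
`n` terms. But in characteristic `p` such a polynomial vanishes at `1` to order less than its
number of terms.
-/

open scoped BigOperators

/-- The discrete Fourier transform on `ℂ^p`:
`û_j = (1/√p) ∑_{k=0}^{p-1} e^{2πi jk/p} u_k`. -/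
noncomputable def dft (p : ℕ) [NeZero p] (u : ZMod p → ℂ) : ZMod p → ℂ := fun j =>
  (1 / (Real.sqrt p : ℂ)) * ∑ k : ZMod p,
    Complex.exp (2 * (Real.pi : ℂ) * Complex.I * (j.val : ℂ) * (k.val : ℂ) / (p : ℂ)) * u k

open Polynomial

namespace Polynomial

variable {R : Type*} [CommRing R] {ι : Type*} [Fintype ι]

lemma coeff_X_mul_derivative_sub_C_mul (f : R[X]) (k n : ℕ) :
    (X * derivative f - C (k : R) * f).coeff n = ((n : R) - k) * f.coeff n := by
  cases n with
  | zero => simp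
  | succ n => rw [coeff_sub, coeff_X_mul, coeff_derivative, coeff_C_mul]; push_cast; ring

lemma support_X_mul_derivative_sub_C_mul_subset (f : R[X]) (k : ℕ) :
    (X * derivative f - C (k : R) * f).support ⊆ f.support.erase k := by
  intro j hj
  rw [mem_support_iff, coeff_X_mul_derivative_sub_C_mul] at hj
  refine Finset.mem_erase.mpr ⟨?_, mem_support_iff.mpr (right_ne_zero_of_mul hj)⟩
  rintro rfl
  simp at hj

/- `f ↦ X f' - k f` multiplies the `j`-th coefficient by `j - k`. For `k` the trailing degree it
kills the lowest term, keeps the others (as `0 < j - k < p`) and lowers the order at `1` by one. -/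
theorem lt_card_support_of_X_sub_one_pow_dvd [IsDomain R] (p : ℕ) [CharP R p] {n : ℕ}
    {f : R[X]} (hf : f ≠ 0) (hdeg : f.natDegree < p) (hdvd : (X - 1) ^ n ∣ f) :
    n < f.support.card := by
  induction n generalizing f with
  | zero => exact Finset.card_pos.mpr (nonempty_support_iff.mpr hf)
  | succ n ih =>
    set k := f.natTrailingDegree
    set g := X * derivative f - C (k : R) * f
    have hg_supp : g.support ⊆ f.support.erase k := support_X_mul_derivative_sub_C_mul_subset f k
    by_cases hg : g = 0
    · have hf_supp : f.support ⊆ {k} := by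
        intro j hj
        have hjk : ((j : R) - k) * f.coeff j = 0 := by
          rw [← coeff_X_mul_derivative_sub_C_mul, ← coeff_zero j]
          exact congrArg (coeff · j) hg
        have hj_eq : (j : R) = k :=
          sub_eq_zero.mp ((mul_eq_zero.mp hjk).resolve_right (mem_support_iff.mp hj))
        exact Finset.mem_singleton.mpr <| CharP.natCast_injOn_Iio R p
          ((le_natDegree_of_mem_supp j hj).trans_lt hdeg)
          (f.natTrailingDegree_le_natDegree.trans_lt hdeg) hj_eq
      obtain ⟨m, a, rfl⟩ := card_support_le_one_iff_monomial.mp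
        ((Finset.card_le_card hf_supp).trans (Finset.card_singleton k).le)
      have : (monomial m a).eval 1 = 0 := by
        obtain ⟨q, hq⟩ := hdvd
        simp [hq]
      exact (hf (by simpa using this)).elim
    · have hg_dvd : (X - 1) ^ n ∣ g := by
        have := pow_sub_one_dvd_derivative_of_pow_dvd hdvd
        simp only [add_tsub_cancel_right] at this
        exact dvd_sub (this.mul_left X) (((pow_dvd_pow _ n.le_succ).trans hdvd).mul_left _)
      have hg_deg : g.natDegree < p :=
        (natDegree_le_natDegree (degree_mono (hg_supp.trans (Finset.erase_subset _ _)))).trans_lt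
          hdeg
      have := (ih hg hg_deg hg_dvd).trans_le (Finset.card_le_card hg_supp)
      rw [Finset.card_erase_of_mem (natTrailingDegree_mem_support_of_nonzero hf)] at this
      omega

lemma coeff_sum_monomial_of_injective {b : ι → ℕ} (hb : Function.Injective b) (c : ι → R)
    (j : ι) : (∑ i, monomial (b i) (c i)).coeff (b j) = c j := by
  rw [finsetSum_coeff, Finset.sum_eq_single j (fun i _ hij => ?_) (by simp)]
  · simp
  · rw [coeff_monomial, if_neg (hb.ne hij)]

lemma support_sum_monomial_subset (b : ι → ℕ) (c : ι → R) :
    (∑ i, monomial (b i) (c i)).support ⊆ Finset.univ.image b := by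
  classical
  intro n hn
  rw [mem_support_iff, finsetSum_coeff] at hn
  obtain ⟨i, -, hi⟩ := Finset.exists_ne_zero_of_sum_ne_zero hn
  rw [coeff_monomial] at hi
  exact Finset.mem_image.mpr ⟨i, Finset.mem_univ i, of_not_not fun h => hi (if_neg h)⟩

lemma prod_X_sub_C_dvd_of_isRoot [IsDomain R] {r : ι → R} (hr : Function.Injective r) {f : R[X]}
    (hf : ∀ i, f.IsRoot (r i)) : ∏ i, (X - C (r i)) ∣ f := by
  rcases eq_or_ne f 0 with rfl | hf0
  · exact dvd_zero _
  have hle : Finset.univ.val.map r ≤ f.roots :=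
    (Multiset.le_iff_subset (Finset.univ.nodup.map hr)).mpr fun x hx => by
      obtain ⟨i, -, rfl⟩ := Multiset.mem_map.mp hx
      exact (mem_roots hf0).mpr (hf i)
  have := (Multiset.prod_X_sub_C_dvd_iff_le_roots hf0 _).mpr hle
  rwa [Multiset.map_map, ← Finset.prod_eq_multiset_prod] at this

end Polynomial

section

open Matrix

variable {S : Type*} [CommRing S] [IsDomain S] {ι : Type*} [Fintype ι]

theorem Matrix.det_ne_zero_of_forall_mulVec_eq_zero_dvd [DecidableEq ι] [WfDvdMonoid S]
    {N : Matrix ι ι S} {t : S} (ht : t ≠ 0) (ht_unit : ¬IsUnit t)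
    (hN : ∀ c, N *ᵥ c = 0 → ∀ j, t ∣ c j) : N.det ≠ 0 := by
  have hpow : ∀ m c, N *ᵥ c = 0 → ∀ j, t ^ m ∣ c j := by
    intro m
    induction m with
    | zero => simp
    | succ m ih =>
      intro c hc j
      choose d hd using hN c hc
      have hNd : N *ᵥ d = 0 := by
        rw [show c = t • d from funext hd, mulVec_smul] at hc
        exact (smul_eq_zero.mp hc).resolve_left ht
      rw [hd j, pow_succ']
      exact mul_dvd_mul_left t (ih d hNd j)
  intro hdet
  obtain ⟨c, hc0, hc⟩ := exists_mulVec_eq_zero_iff.mpr hdet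
  obtain ⟨j, hj⟩ := Function.ne_iff.mp hc0
  obtain ⟨m, hm⟩ := FiniteMultiplicity.of_not_isUnit ht_unit hj
  exact hm (hpow (m + 1) c hc j)

variable {K : Type*} [CommRing K] [IsDomain K] {p : ℕ} [NeZero p] [CharP K p] {ω : S}

theorem IsPrimitiveRoot.dvd_of_mulVec_pow_val_mul_val_eq_zero (hω : IsPrimitiveRoot ω p)
    (φ : S →+* K) (hφω : φ ω = 1) {t : S} (hker : RingHom.ker φ ≤ Ideal.span {t})
    {a b : ι → ZMod p} (ha : Function.Injective a) (hb : Function.Injective b) {c : ι → S}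
    (hc : of (fun i j => ω ^ ((a i).val * (b j).val)) *ᵥ c = 0) (j : ι) : t ∣ c j := by
  by_contra hndvd
  have hφc : φ (c j) ≠ 0 := fun h => hndvd (Ideal.mem_span_singleton.mp (hker h))
  have hb_val : Function.Injective fun i => (b i).val := (ZMod.val_injective p).comp hb
  have hroots : ∏ i, (X - C (ω ^ (a i).val)) ∣ ∑ i, monomial (b i).val (c i) := by
    refine prod_X_sub_C_dvd_of_isRoot (fun i i' h => ha (ZMod.val_injective p ?_)) fun i => ?_
    · exact hω.pow_inj (ZMod.val_lt _) (ZMod.val_lt _) h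
    · have := congrFun hc i
      simp only [mulVec, dotProduct, of_apply, Pi.zero_apply] at this
      simp only [IsRoot, eval_finsetSum, eval_monomial, ← pow_mul]
      rw [← this]
      exact Finset.sum_congr rfl fun k _ => by rw [mul_comm, Nat.mul_comm]
  set f : K[X] := ∑ i, monomial (b i).val (φ (c i))
  have hf_dvd : (X - 1) ^ Fintype.card ι ∣ f := by
    simpa [Polynomial.map_prod, hφω, f, Polynomial.map_sum] using map_dvd (mapRingHom φ) hroots
  have hf0 : f ≠ 0 := fun h => hφc <| by
    rw [← coeff_sum_monomial_of_injective hb_val (fun i => φ (c i)) j]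
    exact congrArg (coeff · (b j).val) h
  have hf_supp := support_sum_monomial_subset (fun i => (b i).val) (fun i => φ (c i))
  have hf_deg : f.natDegree < p := by
    obtain ⟨i, -, hi⟩ := Finset.mem_image.mp (hf_supp (natDegree_mem_support_of_nonzero hf0))
    exact hi ▸ ZMod.val_lt (b i)
  have := (lt_card_support_of_X_sub_one_pow_dvd p hf0 hf_deg hf_dvd).trans_le
    ((Finset.card_le_card hf_supp).trans Finset.card_image_le)
  exact this.false

theorem IsPrimitiveRoot.det_pow_val_mul_val_ne_zero_of_ker_eq_span [DecidableEq ι]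
    [WfDvdMonoid S] (hω : IsPrimitiveRoot ω p) (φ : S →+* K) (hφω : φ ω = 1) {t : S}
    (ht : t ≠ 0) (hker : RingHom.ker φ = Ideal.span {t}) {a b : ι → ZMod p}
    (ha : Function.Injective a) (hb : Function.Injective b) :
    (of fun i j => ω ^ ((a i).val * (b j).val)).det ≠ 0 := by
  have hφt : φ t = 0 := RingHom.mem_ker.mp (hker ▸ Ideal.mem_span_singleton_self t)
  refine det_ne_zero_of_forall_mulVec_eq_zero_dvd ht (fun h => ?_) fun c hc =>
    hω.dvd_of_mulVec_pow_val_mul_val_eq_zero φ hφω hker.le ha hb hc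
  simpa [hφt] using h.map φ

end

namespace AdjoinRoot

lemma root_sub_of_dvd_mk_sub_of_eval {R : Type*} [CommRing R] (f q : R[X]) (a : R) :
    root f - of f a ∣ mk f q - of f (q.eval a) := by
  simpa [mk_X, mk_C] using map_dvd (mk f) (X_sub_C_dvd_sub_C_eval (p := q) (a := a))

variable (p : ℕ) [Fact p.Prime]

noncomputable def cyclotomicToZMod : AdjoinRoot (cyclotomic p ℤ) →+* ZMod p :=
  lift (Int.castRingHom (ZMod p)) 1 <| by
    rw [eval₂_eq_eval_map, map_cyclotomic, eval_one_cyclotomic_prime, ZMod.natCast_self]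

lemma cyclotomicToZMod_root : cyclotomicToZMod p (root _) = 1 := lift_root _

theorem ker_cyclotomicToZMod :
    RingHom.ker (cyclotomicToZMod p) = Ideal.span {root (cyclotomic p ℤ) - 1} := by
  ext s
  induction s using AdjoinRoot.induction_on with | ih q => ?_
  rw [RingHom.mem_ker, Ideal.mem_span_singleton]
  constructor
  · intro h
    have hq := root_sub_of_dvd_mk_sub_of_eval (cyclotomic p ℤ) q 1
    obtain ⟨m, hm⟩ : (p : ℤ) ∣ q.eval 1 := by
      rw [cyclotomicToZMod, lift_mk, eval₂_eq_eval_map, eval_one_map] at h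
      exact (ZMod.intCast_zmod_eq_zero_iff_dvd _ p).mp h
    have hp : root (cyclotomic p ℤ) - 1 ∣ (p : AdjoinRoot (cyclotomic p ℤ)) := by
      simpa [mk_self, eval_one_cyclotomic_prime] using
        root_sub_of_dvd_mk_sub_of_eval (cyclotomic p ℤ) (cyclotomic p ℤ) 1
    simpa [hm] using dvd_add hq (hp.mul_right (of _ m))
  · rintro ⟨r, hr⟩
    simp [hr, cyclotomicToZMod_root]

end AdjoinRoot

open AdjoinRoot in
theorem IsPrimitiveRoot.exists_injective_adjoinRoot_cyclotomic {K : Type*} [Field K]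
    [CharZero K] {n : ℕ} {μ : K} (hμ : IsPrimitiveRoot μ n) (hn : 0 < n) :
    ∃ ι : AdjoinRoot (cyclotomic n ℤ) →+* K, Function.Injective ι ∧ ι (root _) = μ := by
  have hmin := cyclotomic_eq_minpoly hμ hn
  refine ⟨lift (Int.castRingHom K) μ ?_, ?_, lift_root _⟩
  · rw [hmin, ← algebraMap_int_eq, ← aeval_def]
    exact minpoly.aeval ℤ μ
  · rw [injective_iff_map_eq_zero]
    intro s hs
    induction s using AdjoinRoot.induction_on with | ih q => ?_
    rw [lift_mk, ← algebraMap_int_eq, ← aeval_def] at hs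
    rw [mk_eq_zero, hmin]
    exact minpoly.isIntegrallyClosed_dvd (hμ.isIntegral hn) hs

open AdjoinRoot Matrix in
theorem IsPrimitiveRoot.det_pow_val_mul_val_ne_zero {K : Type*} [Field K] [CharZero K] {p : ℕ}
    [Fact p.Prime] {μ : K} (hμ : IsPrimitiveRoot μ p) {ι : Type*} [Fintype ι] [DecidableEq ι]
    {a b : ι → ZMod p} (ha : Function.Injective a) (hb : Function.Injective b) :
    (of fun i j => μ ^ ((a i).val * (b j).val)).det ≠ 0 := by
  have hp : p.Prime := Fact.out
  obtain ⟨ι', hι', hroot⟩ := hμ.exists_injective_adjoinRoot_cyclotomic hp.pos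
  have := hι'.isDomain
  have hω : IsPrimitiveRoot (root (cyclotomic p ℤ)) p :=
    .of_map_of_injective (hroot ▸ hμ) hι'
  have hdet := hω.det_pow_val_mul_val_ne_zero_of_ker_eq_span (cyclotomicToZMod p)
    (cyclotomicToZMod_root p) (sub_ne_zero.mpr (hω.ne_one hp.one_lt)) (ker_cyclotomicToZMod p)
    ha hb
  rw [← map_ne_zero_iff ι' hι', RingHom.map_det] at hdet
  convert hdet using 2
  ext i j
  simp [hroot]

lemma dft_eq_sum_pow (p : ℕ) [NeZero p] (u : ZMod p → ℂ) (j : ZMod p) :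
    dft p u j = 1 / (Real.sqrt p : ℂ) *
      ∑ k, Complex.exp (2 * Real.pi * Complex.I / p) ^ (j.val * k.val) * u k := by
  simp only [dft, ← Complex.exp_nat_mul]
  congr 2
  ext k
  push_cast
  ring_nf

/-- For `p` prime and `u ∈ ℂ^p`, `u ≠ 0`, the supports of `u` and of its Fourier transform
`û` satisfy `|supp(u)| + |supp(û)| ≥ p + 1`. -/
theorem support_add_support_dft (p : ℕ) (hp : p.Prime) [NeZero p]
    (u : ZMod p → ℂ) (hu : u ≠ 0) :
    p + 1 ≤ (Finset.univ.filter fun i : ZMod p => u i ≠ 0).card +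
      (Finset.univ.filter fun i : ZMod p => dft p u i ≠ 0).card := by
  classical
  have := Fact.mk hp
  set A := Finset.univ.filter fun i : ZMod p => u i ≠ 0
  set D := Finset.univ.filter fun i : ZMod p => dft p u i ≠ 0
  by_contra! hlt
  have hAD : A.card ≤ Dᶜ.card := by
    rw [Finset.card_compl, ZMod.card]
    omega
  obtain ⟨T, hTD, hT⟩ := Finset.exists_subset_card_eq hAD
  let e : A ≃ T := Finset.equivOfCardEq hT.symm
  refine (Complex.isPrimitiveRoot_exp p hp.ne_zero).det_pow_val_mul_val_ne_zero
    (a := fun x => (e x : ZMod p)) (Subtype.val_injective.comp e.injective)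
    Subtype.val_injective (Matrix.exists_mulVec_eq_zero_iff.mp ⟨fun x => u x, ?_, ?_⟩)
  · obtain ⟨k, hk⟩ := Function.ne_iff.mp hu
    exact Function.ne_iff.mpr ⟨⟨k, by simpa [A] using hk⟩, hk⟩
  · ext x
    have hdft : dft p u (e x) = 0 := by simpa [D] using hTD (e x).2
    rw [dft_eq_sum_pow, mul_eq_zero, or_iff_right (by simp [hp.ne_zero]),
      ← Finset.sum_filter_of_ne fun k _ hk => right_ne_zero_of_mul hk,
      ← Finset.sum_coe_sort] at hdft
    simpa [Matrix.mulVec, dotProduct] using hdft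
end

section
/- Let p be a prime number and let φ : ℂ^{2p−2} → ℂ^{2p−2} be given by φ_j(x', y') = x_j y_j and φ_{p−1+j}(x', y') = x̂_j ŷ_{−j} for 1 ≤ j ≤ p−1, where x = (1, x_1, …, x_{p−1}) and y = (1, y_1, …, y_{p−1}). Then at every zero z of φ (i.e., every z with φ(z) = 0), the complex derivative φ'(z) : ℂ^{2p−2} → ℂ^{2p−2} is invertible (equivalently, the complex Jacobian determinant det φ'(z) is nonzero); in particular every zero of φ is simple. -/
/-!
`φ` is the restriction to `x₀ = y₀ = 1` of the bilinear map
`B(x, y) = (x_j y_j, x̂_j ŷ_{-j})_{j ≠ 0}`, so `φ'(z)(u, v) = B(x, v) + B(u, y)` with `u₀ = v₀ = 0`.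
At a zero, `x_j ≠ 0` forces `y_j = 0` and then `v_j = 0`, so `v` is supported on the zeros of `x`;
likewise `v̂_{-j} = 0` whenever `j ≠ 0` and `x̂_j ≠ 0`. Tao's uncertainty principle over `ℤ/p`,
`|supp x| + |supp x̂| ≥ p + 1`, says that there are at least as many such frequencies as zeros of
`x`, and a vector supported on `S` whose transform vanishes on `|S|` frequencies is zero because
every square minor of the Fourier matrix is invertible (Chebotarev). Hence `v = 0`, and `u = 0`
symmetrically.

Chebotarev's theorem: `det (X_i ^ k_j) = V(X) · Q(X)` with `V` the Vandermonde and `Q` an integer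
polynomial. Substituting `X_i = t ^ i` and cancelling `(t - 1) ^ (n(n-1)/2)` gives
`∏ (j - i) · Q(1, …, 1) = ∏ (k_j - k_i)`, which is prime to `p`. If the minor at
`X_i = ζ ^ a_i` vanished, then `Q(ζ ^ a_1, …) = 0`, so `Φ_p` would divide `Q(t ^ a_1, …)` and
`p = Φ_p(1)` would divide `Q(1, …, 1)`.
-/

open scoped BigOperators

/-- Extension of `(x_1, …, x_{p-1}) ∈ ℂ^{p-1}` to `x = (1, x_1, …, x_{p-1}) ∈ ℂ^p`. -/
noncomputable def ext (p : ℕ) [NeZero p] (x' : {i : ZMod p // i ≠ 0} → ℂ) : ZMod p → ℂ :=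
  fun i => if h : i = 0 then 1 else x' ⟨i, h⟩

/-- The map `φ : ℂ^{2p-2} → ℂ^{2p-2}`, `φ_j(x',y') = x_j y_j` and
`φ_{p-1+j}(x',y') = x̂_j ŷ_{-j}` for `1 ≤ j ≤ p-1`, where `x = (1, x_1, …, x_{p-1})`
and `y = (1, y_1, …, y_{p-1})`. -/
noncomputable def phi (p : ℕ) [NeZero p] :
    (({i : ZMod p // i ≠ 0} → ℂ) × ({i : ZMod p // i ≠ 0} → ℂ)) →
      (({i : ZMod p // i ≠ 0} → ℂ) × ({i : ZMod p // i ≠ 0} → ℂ)) :=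
  fun z => (fun j => z.1 j * z.2 j,
            fun j => dft p (ext p z.1) (j : ZMod p) * dft p (ext p z.2) (-(j : ZMod p)))

open Finset Matrix

section Vandermonde

variable {R : Type*} [CommRing R] {n : ℕ}

def Matrix.genVandermonde (v : Fin n → R) (k : Fin n → ℕ) : Matrix (Fin n) (Fin n) R :=
  .of fun i j => v i ^ k j

lemma AlgHom.mapMatrix_genVandermonde {S A : Type*} [CommRing S] [CommRing A] [Algebra S R]
    [Algebra S A] (f : R →ₐ[S] A) (v : Fin n → R) (k : Fin n → ℕ) :
    f.mapMatrix (genVandermonde v k) = genVandermonde (f ∘ v) k := by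
  ext i j
  simp [genVandermonde]

lemma AlgHom.mapMatrix_vandermonde {S A : Type*} [CommRing S] [CommRing A] [Algebra S R]
    [Algebra S A] (f : R →ₐ[S] A) (v : Fin n → R) :
    f.mapMatrix (vandermonde v) = vandermonde (f ∘ v) := by
  ext i j
  simp [vandermonde]

lemma Matrix.genVandermonde_pow_eq_transpose_vandermonde (x : R) (k : Fin n → ℕ) :
    genVandermonde (fun i => x ^ (i : ℕ)) k = (vandermonde fun j => x ^ k j)ᵀ := by
  ext i j
  simp [genVandermonde, vandermonde, ← pow_mul, mul_comm]

namespace MvPolynomial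

variable {σ : Type*} [DecidableEq σ]

lemma X_sub_X_dvd_sub_rename_update (i j : σ) (P : MvPolynomial σ R) :
    X i - X j ∣ P - rename (Function.update id i j) P := by
  set τ := rename (R := R) (Function.update id i j)
  induction P using MvPolynomial.induction_on with
  | C a => simp [τ]
  | add P Q hP hQ => simpa only [map_add, add_sub_add_comm] using dvd_add hP hQ
  | mul_X P s hP =>
    have hs : X i - X j ∣ X s - τ (X s) := by
      by_cases h : s = i <;> simp [τ, h]
    rw [show P * X s - τ (P * X s) = (P - τ P) * X s + τ P * (X s - τ (X s)) by
      rw [map_mul]; ring]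
    exact dvd_add (hP.mul_right _) (hs.mul_left _)

lemma X_sub_X_dvd_iff_rename_update_eq_zero {i j : σ} {P : MvPolynomial σ R} :
    X i - X j ∣ P ↔ rename (Function.update id i j) P = 0 := by
  constructor
  · rintro ⟨Q, rfl⟩
    simp [Function.update_apply]
  · intro h
    simpa [h] using X_sub_X_dvd_sub_rename_update i j P

lemma prime_X_sub_X [IsDomain R] {i j : σ} (hij : i ≠ j) :
    Prime (X i - X j : MvPolynomial σ R) := by
  refine ⟨sub_ne_zero.2 fun h => hij (X_injective h), fun hu => ?_, fun P Q hPQ => ?_⟩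
  · have := hu.map (rename (R := R) (Function.update id i j))
    simp [Function.update_apply] at this
  · simpa only [X_sub_X_dvd_iff_rename_update_eq_zero, map_mul, mul_eq_zero] using hPQ

lemma det_vandermonde_X_dvd_det_genVandermonde [IsDomain R] [UniqueFactorizationMonoid R]
    (k : Fin n → ℕ) :
    (vandermonde (X : Fin n → MvPolynomial (Fin n) R)).det ∣ (genVandermonde X k).det := by
  rw [det_vandermonde, prod_sigma']
  refine prod_dvd_of_isRelPrime ?_ fun q hq => ?_
  · rintro ⟨i, j⟩ hij ⟨i', j'⟩ hij' hne
    simp only [coe_sigma, Set.mem_sigma_iff, mem_coe, mem_univ, mem_Ioi, true_and] at hij hij'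
    refine ((prime_X_sub_X hij.ne').irreducible.isRelPrime_iff_not_dvd).2 ?_
    rw [X_sub_X_dvd_iff_rename_update_eq_zero]
    simp only [map_sub, rename_X, Function.update_apply, id, sub_eq_zero]
    intro h
    -- identifying `X j` with `X i` only kills `X j' - X i'` when `{i', j'} = {i, j}`
    have := X_injective h
    split_ifs at this <;> subst_vars <;> simp_all
    exact lt_asymm hij hij'
  · obtain ⟨i, j⟩ := q
    simp only [mem_sigma, mem_univ, mem_Ioi, true_and] at hq
    rw [X_sub_X_dvd_iff_rename_update_eq_zero, AlgHom.map_det, AlgHom.mapMatrix_genVandermonde]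
    refine det_zero_of_row_eq hq.ne' ?_
    funext l
    simp [genVandermonde, Function.update_apply]

lemma aeval_aeval_X_pow {R A σ : Type*} [CommSemiring R] [CommSemiring A] [Algebra R A]
    (e : σ → ℕ) (x : A) (Q : MvPolynomial σ R) :
    Polynomial.aeval x (aeval (fun i => (Polynomial.X : Polynomial R) ^ e i) Q)
      = aeval (fun i => x ^ e i) Q := by
  simp [comp_aeval_apply]

lemma eval_one_aeval_X_pow {R σ : Type*} [CommSemiring R] (e : σ → ℕ) (Q : MvPolynomial σ R) :
    (aeval (fun i => (Polynomial.X : Polynomial R) ^ e i) Q).eval 1 = eval 1 Q := by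
  simpa [Polynomial.coe_aeval_eq_eval, coe_aeval_eq_eval, Pi.one_def] using
    aeval_aeval_X_pow e (1 : R) Q

end MvPolynomial

namespace Polynomial

lemma exists_X_pow_sub_X_pow_eq_mul (c d : ℕ) :
    ∃ h : R[X], X ^ c - X ^ d = (X - 1) * h ∧ h.eval 1 = c - d := by
  have hmul := mul_divByMonic_eq_iff_isRoot.2 (show (X ^ c - X ^ d : R[X]).IsRoot 1 by simp)
  refine ⟨_, by simpa using hmul.symm, ?_⟩
  simpa [derivative_mul, derivative_X_pow] using congrArg (fun q => (derivative q).eval 1) hmul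

lemma exists_det_vandermonde_X_pow_eq_mul (e : Fin n → ℕ) :
    ∃ r : R[X], (vandermonde fun i => (X : R[X]) ^ e i).det
        = (∏ i : Fin n, ∏ _j ∈ Ioi i, (X - 1 : R[X])) * r ∧
      r.eval 1 = ∏ i : Fin n, ∏ j ∈ Ioi i, ((e j : R) - e i) := by
  choose h hh using exists_X_pow_sub_X_pow_eq_mul (R := R)
  refine ⟨∏ i : Fin n, ∏ j ∈ Ioi i, h (e j) (e i), ?_, ?_⟩
  · simp_rw [det_vandermonde, (hh _ _).1, prod_mul_distrib]
  · simp [eval_prod, (hh _ _).2]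

end Polynomial

end Vandermonde

section Chebotarev

open Polynomial

lemma IsPrimitiveRoot.dvd_eval_one_of_aeval_eq_zero {K : Type*} [Field K] [CharZero K] {p : ℕ}
    [Fact p.Prime] {ζ : K} (hζ : IsPrimitiveRoot ζ p) {q : ℤ[X]} (hq : aeval ζ q = 0) :
    (p : ℤ) ∣ q.eval 1 := by
  have hpos := (Fact.out : p.Prime).pos
  obtain ⟨c, rfl⟩ : cyclotomic p ℤ ∣ q := by
    rw [cyclotomic_eq_minpoly hζ hpos]
    exact minpoly.isIntegrallyClosed_dvd (hζ.isIntegral hpos) hq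
  simp [eval_one_cyclotomic_prime]

lemma not_dvd_eval_one_of_det_vandermonde_mul_eq {n p : ℕ} (hp : p.Prime) {k : Fin n → ℕ}
    (hk : Function.Injective k) (hkp : ∀ j, k j < p) {Q : MvPolynomial (Fin n) ℤ}
    (hQ : (vandermonde MvPolynomial.X).det * Q = (genVandermonde MvPolynomial.X k).det) :
    ¬ (p : ℤ) ∣ MvPolynomial.eval 1 Q := by
  have hQt := congrArg (MvPolynomial.aeval fun i : Fin n => (X : ℤ[X]) ^ (i : ℕ)) hQ
  rw [map_mul, AlgHom.map_det, AlgHom.map_det, AlgHom.mapMatrix_vandermonde,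
    AlgHom.mapMatrix_genVandermonde] at hQt
  simp only [Function.comp_def, MvPolynomial.aeval_X,
    genVandermonde_pow_eq_transpose_vandermonde, det_transpose] at hQt
  obtain ⟨r, hr, hr1⟩ := exists_det_vandermonde_X_pow_eq_mul (R := ℤ) fun i : Fin n => (i : ℕ)
  obtain ⟨s, hs, hs1⟩ := exists_det_vandermonde_X_pow_eq_mul (R := ℤ) k
  have hX : (∏ i : Fin n, ∏ _j ∈ Ioi i, (X - 1 : ℤ[X])) ≠ 0 :=
    prod_ne_zero_iff.2 fun _ _ => prod_ne_zero_iff.2 fun _ _ => by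
      simpa using X_sub_C_ne_zero (1 : ℤ)
  rw [hr, hs, mul_assoc] at hQt
  have hQ1 := congrArg (eval 1) (mul_left_cancel₀ hX hQt)
  rw [eval_mul, hr1, hs1, MvPolynomial.eval_one_aeval_X_pow] at hQ1
  intro hdvd
  have hpZ : Prime (p : ℤ) := Nat.prime_iff_prime_int.mp hp
  obtain ⟨i, -, hi⟩ := (hpZ.dvd_finsetProd_iff _).1 (hQ1 ▸ dvd_mul_of_dvd_right hdvd _)
  obtain ⟨j, hj, hij⟩ := (hpZ.dvd_finsetProd_iff _).1 hi
  have := Int.eq_zero_of_dvd_of_natAbs_lt_natAbs hij (by have := hkp i; have := hkp j; omega)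
  exact (mem_Ioi.1 hj).ne' (hk (by omega))

def fourierMatrix {K : Type*} [Monoid K] (p : ℕ) (ζ : K) : Matrix (ZMod p) (ZMod p) K :=
  .of fun t s => ζ ^ (t.val * s.val)

theorem det_submatrix_fourierMatrix_ne_zero {K : Type*} [Field K] [CharZero K] {p : ℕ}
    [Fact p.Prime] {ζ : K} (hζ : IsPrimitiveRoot ζ p) {n : ℕ} {a k : Fin n → ZMod p}
    (ha : Function.Injective a) (hk : Function.Injective k) :
    ((fourierMatrix p ζ).submatrix a k).det ≠ 0 := by
  obtain ⟨Q, hQ⟩ :=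
    MvPolynomial.det_vandermonde_X_dvd_det_genVandermonde (R := ℤ) fun j => (k j).val
  have hQ1 := not_dvd_eval_one_of_det_vandermonde_mul_eq Fact.out
    ((ZMod.val_injective p).comp hk) (fun j => ZMod.val_lt (k j)) hQ.symm
  have hdet : ((fourierMatrix p ζ).submatrix a k).det
      = (vandermonde fun i => ζ ^ (a i).val).det
        * MvPolynomial.aeval (fun i => ζ ^ (a i).val) Q := by
    have := congrArg (MvPolynomial.aeval (R := ℤ) fun i => ζ ^ (a i).val) hQ
    rw [map_mul, AlgHom.map_det, AlgHom.map_det, AlgHom.mapMatrix_vandermonde,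
      AlgHom.mapMatrix_genVandermonde] at this
    simp only [Function.comp_def, MvPolynomial.aeval_X] at this
    rw [← this]
    congr 1
    ext i j
    simp [fourierMatrix, genVandermonde, pow_mul]
  have hV : (vandermonde fun i => ζ ^ (a i).val).det ≠ 0 :=
    det_vandermonde_ne_zero_iff.2 fun i j h =>
      ha (ZMod.val_injective p (hζ.pow_inj (ZMod.val_lt _) (ZMod.val_lt _) h))
  rw [hdet]
  refine mul_ne_zero hV fun hQζ => hQ1 ?_
  simpa [MvPolynomial.eval_one_aeval_X_pow] using
    hζ.dvd_eval_one_of_aeval_eq_zero (q := MvPolynomial.aeval (fun i => X ^ (a i).val) Q)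
      (by rwa [MvPolynomial.aeval_aeval_X_pow])

end Chebotarev

theorem Matrix.eq_zero_of_support_subset_of_mulVec_eq_zero {ι R : Type*} [Fintype ι]
    [DecidableEq ι] [CommRing R] [NoZeroDivisors R] {M : Matrix ι ι R}
    (hM : ∀ n (a k : Fin n → ι), Function.Injective a → Function.Injective k →
      (M.submatrix a k).det ≠ 0)
    {w : ι → R} {S T : Finset ι} (hS : ∀ i ∉ S, w i = 0) (hT : ∀ t ∈ T, (M *ᵥ w) t = 0)
    (hST : #S ≤ #T) : w = 0 := by
  obtain ⟨T', hT'T, hT'⟩ := exists_subset_card_eq hST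
  set eS : Fin #S ≃ S := S.equivFin.symm
  set eT : Fin #S ≃ T' := (T'.equivFinOfCardEq hT').symm
  set a : Fin #S → ι := fun i => eT i
  set k : Fin #S → ι := fun j => eS j
  have hwk : M.submatrix a k *ᵥ (w ∘ k) = 0 := by
    funext i
    calc (M.submatrix a k *ᵥ (w ∘ k)) i = ∑ s : S, M (a i) s * w s :=
          eS.sum_comp fun s : S => M (a i) s * w s
      _ = ∑ s, M (a i) s * w s := by
          rw [sum_coe_sort S fun s => M (a i) s * w s]
          exact sum_subset (subset_univ S) fun s _ hs => by rw [hS s hs, mul_zero]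
      _ = 0 := hT _ (hT'T (eT i).2)
  have hk0 := eq_zero_of_mulVec_eq_zero (hM _ a k (Subtype.val_injective.comp eT.injective)
    (Subtype.val_injective.comp eS.injective)) hwk
  funext i
  by_cases hi : i ∈ S
  · simpa [k] using congrFun hk0 (eS.symm ⟨i, hi⟩)
  · exact hS i hi

section Uncertainty

open Complex

variable {p : ℕ} [NeZero p]

lemma dft_eq_smul_mulVec (u : ZMod p → ℂ) :
    dft p u = (1 / (Real.sqrt p : ℂ)) • (fourierMatrix p (exp (2 * Real.pi * I / p)) *ᵥ u) := by
  funext j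
  simp only [dft, Pi.smul_apply, smul_eq_mul, mulVec, dotProduct, fourierMatrix, of_apply,
    ← exp_nat_mul]
  congr 2 with k
  push_cast
  ring_nf

variable [Fact p.Prime]

theorem eq_zero_of_support_subset_of_dft_eq_zero {w : ZMod p → ℂ} {S T : Finset (ZMod p)}
    (hS : ∀ i ∉ S, w i = 0) (hT : ∀ t ∈ T, dft p w t = 0) (hST : #S ≤ #T) : w = 0 := by
  refine eq_zero_of_support_subset_of_mulVec_eq_zero (fun n a k ha hk =>
    det_submatrix_fourierMatrix_ne_zero (isPrimitiveRoot_exp p (NeZero.ne p)) ha hk) hS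
    (fun t ht => ?_) hST
  have := hT t ht
  rw [dft_eq_smul_mulVec] at this
  simpa [NeZero.ne p] using this

theorem lt_card_support_add_card_support_dft {w : ZMod p → ℂ} (hw : w ≠ 0) :
    p < #{i | w i ≠ 0} + #{j | dft p w j ≠ 0} := by
  by_contra! h
  have hcard := card_filter_add_card_filter_not (s := univ) fun j => dft p w j = 0
  simp only [← ne_eq, card_univ, ZMod.card] at hcard
  exact hw (eq_zero_of_support_subset_of_dft_eq_zero (S := {i | w i ≠ 0})
    (T := {j | dft p w j = 0}) (by simp) (by simp) (by omega))

end Uncertainty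

section Derivative

variable (p : ℕ) [NeZero p]

local notation "E" => {i : ZMod p // i ≠ 0} → ℂ

noncomputable def phiBilin : (ZMod p → ℂ) →L[ℂ] (ZMod p → ℂ) →L[ℂ] E × E :=
  LinearMap.toContinuousLinearMap <| (LinearMap.toContinuousLinearMap : _ ≃ₗ[ℂ] _).toLinearMap ∘ₗ
    LinearMap.mk₂ ℂ (fun x y => (fun j => x j * y j, fun j => dft p x j * dft p y (-j)))
      (fun x x' y => by ext j <;> simp [dft_eq_smul_mulVec, mulVec_add] <;> ring)
      (fun c x y => by ext j <;> simp [dft_eq_smul_mulVec, mulVec_smul] <;> ring)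
      (fun x y y' => by ext j <;> simp [dft_eq_smul_mulVec, mulVec_add] <;> ring)
      (fun c x y => by ext j <;> simp [dft_eq_smul_mulVec, mulVec_smul] <;> ring)

@[simp]
lemma phiBilin_apply (x y : ZMod p → ℂ) :
    phiBilin p x y = ((fun j => x j * y j, fun j => dft p x j * dft p y (-j)) : E × E) := by
  simp [phiBilin]

noncomputable def extZero : E →L[ℂ] ZMod p → ℂ :=
  LinearMap.toContinuousLinearMap (Function.ExtendByZero.linearMap ℂ Subtype.val)

lemma extZero_apply_zero (u : E) : extZero p u 0 = 0 := by
  simp [extZero, Function.extend_apply']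

lemma extZero_apply_coe (u : E) (j : {i : ZMod p // i ≠ 0}) : extZero p u j = u j := by
  simp [extZero]

lemma extZero_injective : Function.Injective (extZero p) := by
  simp only [extZero, LinearMap.coe_toContinuousLinearMap']
  exact Function.extend_injective Subtype.val_injective (0 : ZMod p → ℂ)

lemma ext_apply_coe (u : E) (j : {i : ZMod p // i ≠ 0}) : ext p u j = u j := by
  simp [_root_.ext, j.2]

lemma ext_ne_zero (u : E) : ext p u ≠ 0 :=
  fun h => one_ne_zero (α := ℂ) (by simpa [_root_.ext] using congrFun h 0)

lemma ext_eq_single_add_extZero (u : E) : ext p u = Pi.single 0 1 + extZero p u := by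
  funext i
  rcases eq_or_ne i 0 with rfl | hi
  · simp [_root_.ext, extZero_apply_zero]
  · lift i to {i : ZMod p // i ≠ 0} using hi
    simp [ext_apply_coe, extZero_apply_coe, i.2]

lemma phi_eq_phiBilin (z : E × E) : phi p z = phiBilin p (ext p z.1) (ext p z.2) := by
  simp [phi, ext_apply_coe]

lemma fderiv_phi_apply (z w : E × E) :
    fderiv ℂ (phi p) z w
      = phiBilin p (ext p z.1) (extZero p w.2) + phiBilin p (extZero p w.1) (ext p z.2) := by
  have hext (L : E × E →L[ℂ] E) : HasFDerivAt (fun z => ext p (L z)) (extZero p ∘L L) z := by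
    simp_rw [ext_eq_single_add_extZero]
    exact (extZero p ∘L L).hasFDerivAt.const_add _
  have hphi : HasFDerivAt (fun z : E × E => phiBilin p (ext p z.1) (ext p z.2)) _ z :=
    (phiBilin p).hasFDerivAt_of_bilinear (hext (.fst ℂ E E)) (hext (.snd ℂ E E))
  rw [show phi p = _ from funext (phi_eq_phiBilin p), hphi.fderiv]
  simp

end Derivative

section Linearization

variable {p : ℕ} [NeZero p] [Fact p.Prime]

theorem eq_zero_of_linearization_eq_zero {x y U V : ZMod p → ℂ} (hx : x ≠ 0) (hV : V 0 = 0)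
    (hxy : ∀ j ≠ 0, x j * y j = 0) (hxy' : ∀ j ≠ 0, dft p x j * dft p y (-j) = 0)
    (hUV : ∀ j ≠ 0, x j * V j + U j * y j = 0)
    (hUV' : ∀ j ≠ 0, dft p x j * dft p V (-j) + dft p U j * dft p y (-j) = 0) : V = 0 := by
  refine eq_zero_of_support_subset_of_dft_eq_zero (S := {i | x i = 0})
    (T := {t | t ≠ 0 ∧ dft p x (-t) ≠ 0}) (fun i hi => ?_) (fun t ht => ?_) ?_
  · simp only [mem_filter, mem_univ, true_and] at hi
    by_cases h0 : i = 0
    · rwa [h0]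
    have := hUV i h0
    rw [(mul_eq_zero.1 (hxy i h0)).resolve_left hi, mul_zero, add_zero] at this
    exact (mul_eq_zero.1 this).resolve_left hi
  · simp only [mem_filter, mem_univ, true_and] at ht
    have h0 : -t ≠ 0 := neg_ne_zero.2 ht.1
    have hy := (mul_eq_zero.1 (hxy' (-t) h0)).resolve_left ht.2
    have := hUV' (-t) h0
    rw [neg_neg] at hy this
    rw [hy, mul_zero, add_zero] at this
    exact (mul_eq_zero.1 this).resolve_left ht.2
  · have hunc := lt_card_support_add_card_support_dft hx
    have hx0 := card_filter_add_card_filter_not (s := univ) fun i => x i = 0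
    simp only [← ne_eq, card_univ, ZMod.card] at hx0
    have hneg : #{t | dft p x (-t) ≠ 0} = #{j | dft p x j ≠ 0} :=
      card_nbij' (-·) (-·) (fun t => by simp) (fun t => by simp) (fun t _ => neg_neg t)
        (fun t _ => neg_neg t)
    have hins : #{t | dft p x (-t) ≠ 0} ≤ #{t | t ≠ 0 ∧ dft p x (-t) ≠ 0} + 1 := by
      refine (card_le_card fun t ht => ?_).trans (card_insert_le 0 _)
      by_cases h0 : t = 0 <;> simp_all
    omega

theorem eq_zero_and_eq_zero_of_phiBilin_add_eq_zero {x y U V : ZMod p → ℂ} (hx : x ≠ 0)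
    (hy : y ≠ 0) (hU : U 0 = 0) (hV : V 0 = 0) (hxy : phiBilin p x y = 0)
    (hUV : phiBilin p x V + phiBilin p U y = 0) : U = 0 ∧ V = 0 := by
  have h₁ (j) (hj : j ≠ 0) : x j * y j = 0 := by
    simpa using congrFun (congrArg Prod.fst hxy) ⟨j, hj⟩
  have h₂ (j) (hj : j ≠ 0) : dft p x j * dft p y (-j) = 0 := by
    simpa using congrFun (congrArg Prod.snd hxy) ⟨j, hj⟩
  have h₃ (j) (hj : j ≠ 0) : x j * V j + U j * y j = 0 := by
    simpa using congrFun (congrArg Prod.fst hUV) ⟨j, hj⟩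
  have h₄ (j) (hj : j ≠ 0) : dft p x j * dft p V (-j) + dft p U j * dft p y (-j) = 0 := by
    simpa using congrFun (congrArg Prod.snd hUV) ⟨j, hj⟩
  refine ⟨eq_zero_of_linearization_eq_zero (y := x) (U := V) hy hU (fun j hj => ?_)
    (fun j hj => ?_) (fun j hj => ?_) (fun j hj => ?_),
    eq_zero_of_linearization_eq_zero hx hV h₁ h₂ h₃ h₄⟩
  · linear_combination h₁ j hj
  · simpa [mul_comm] using h₂ (-j) (neg_ne_zero.2 hj)
  · linear_combination h₃ j hj
  · have := h₄ (-j) (neg_ne_zero.2 hj)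
    rw [neg_neg] at this
    linear_combination this

end Linearization

/-- For `p` prime, at every zero `z` of `φ` the complex derivative `φ'(z)` is invertible
(as a linear map `ℂ^{2p-2} → ℂ^{2p-2}`); in particular every zero of `φ` is simple. -/
theorem phi_deriv_bijective_at_zeros (p : ℕ) (hp : p.Prime) [NeZero p]
    (z : ({i : ZMod p // i ≠ 0} → ℂ) × ({i : ZMod p // i ≠ 0} → ℂ))
    (hz : phi p z = 0) :
    Function.Bijective (fderiv ℂ (phi p) z) := by
  have : Fact p.Prime := ⟨hp⟩
  have hinj : Function.Injective (fderiv ℂ (phi p) z) := by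
    refine (injective_iff_map_eq_zero _).2 fun w hw => ?_
    rw [fderiv_phi_apply] at hw
    rw [phi_eq_phiBilin] at hz
    obtain ⟨h₁, h₂⟩ := eq_zero_and_eq_zero_of_phiBilin_add_eq_zero (ext_ne_zero p z.1)
      (ext_ne_zero p z.2) (extZero_apply_zero p w.1) (extZero_apply_zero p w.2) hz hw
    exact Prod.ext (extZero_injective p (h₁.trans (map_zero _).symm))
      (extZero_injective p (h₂.trans (map_zero _).symm))
  exact ⟨hinj, LinearMap.injective_iff_surjective.1 hinj⟩
end
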